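/- arXiv:2009.06965 — 2 statements merged into one kernel-verified Lean document; each statement's English description precedes it below -/
import Mathlib

section
/- Let D : ℝ≥0 → ℝ be a strictly decreasing credit-demand function, i.e., for all p₁ ≠ p₂ ≥ 0, (p₁ - p₂)·(D(p₁) - D(p₂)) < 0. Let E > 0 be the total endowment. Suppose p₁, p₂ ≥ 0 both satisfy the complementarity conditions pᵢ·(D(pᵢ) - E) = 0 and D(pᵢ) - E ≤ 0. Then p₁ = p₂. -/
theorem stmt_3 (D : ℝ → ℝ) (E : ℝ) (hE : 0 < E)
    (hD : ∀ p₁ p₂ : ℝ, 0 ≤ p₁ → 0 ≤ p₂ → p₁ ≠ p₂ →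
      (p₁ - p₂) * (D p₁ - D p₂) < 0)
    (p₁ p₂ : ℝ) (hp₁ : 0 ≤ p₁) (hp₂ : 0 ≤ p₂)
    (hc₁ : p₁ * (D p₁ - E) = 0) (hc₁' : D p₁ - E ≤ 0)
    (hc₂ : p₂ * (D p₂ - E) = 0) (hc₂' : D p₂ - E ≤ 0) :
    p₁ = p₂ := by
  by_contra h
  have := hD p₁ p₂ hp₁ hp₂ h
  nlinarith [mul_nonneg hp₁ (neg_nonneg.mpr hc₂'), mul_nonneg hp₂ (neg_nonneg.mpr hc₁')]
end

section
/- Let C : Fin n → ℝ, Toll : Fin n → ℝ, μ > 0, L > 0, w > 0. Define for each price p ≥ 0 the utilities C_p(k) = C(k) - p·Toll(k)·L·w and the expected toll E(p) = Σ_k Pr_k(C_p)·Toll(k)·L·w, where Pr is the logit probability with scale μ. If Toll is not constant, then E is strictly decreasing in p; in particular for p₁ ≠ p₂, (p₁ - p₂)·(E(p₁) - E(p₂)) < 0. -/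
theorem stmt_9 (n : ℕ) (C Toll : Fin n → ℝ) (μ L w : ℝ)
    (hμ : 0 < μ) (hL : 0 < L) (hw : 0 < w)
    (hToll : ¬ ∀ k l : Fin n, Toll k = Toll l)
    (E : ℝ → ℝ)
    (hE : ∀ p : ℝ, E p = ∑ k : Fin n,
      (Real.exp (μ * (C k - p * Toll k * L * w)) /
        ∑ j : Fin n, Real.exp (μ * (C j - p * Toll j * L * w))) *
      Toll k * L * w) :
    StrictAntiOn E (Set.Ici (0 : ℝ)) ∧
    ∀ p₁ p₂ : ℝ, 0 ≤ p₁ → 0 ≤ p₂ → p₁ ≠ p₂ →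
      (p₁ - p₂) * (E p₁ - E p₂) < 0 := by
  push_neg at hToll
  obtain ⟨k₀, l₀, hkl⟩ := hToll
  set g : ℝ → Fin n → ℝ := fun p k => Real.exp (μ * (C k - p * Toll k * L * w)) with hg
  have hgpos : ∀ p k, 0 < g p k := fun p k => Real.exp_pos _
  have hSpos : ∀ p, 0 < ∑ j, g p j :=
    fun p => Finset.sum_pos (fun j _ => hgpos p j) ⟨k₀, Finset.mem_univ k₀⟩
  have hEp : ∀ p, E p = (∑ k, g p k * Toll k) * (L * w) / (∑ j, g p j) := by
    intro p
    have h0 := (hSpos p).ne'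
    rw [hE p, Finset.sum_mul, Finset.sum_div]
    refine Finset.sum_congr rfl fun k _ => ?_
    simp only [hg] at h0 ⊢
    field_simp
  have key : ∀ p q : ℝ, p < q → E q < E p := by
    intro p q hpq
    have hexp : ∀ k l : Fin n, Toll k < Toll l →
        g p k * g q l < g p l * g q k := by
      intro k l hT
      simp only [hg]
      rw [← Real.exp_add, ← Real.exp_add, Real.exp_lt_exp]
      nlinarith [mul_pos (mul_pos (mul_pos hμ hL) hw)
        (mul_pos (sub_pos.2 hpq) (sub_pos.2 hT))]
    set F : Fin n → Fin n → ℝ := fun k l => g p k * g q l * (Toll k - Toll l) with hF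
    have hFrw : ∀ k l, F k l + F l k =
        (Toll k - Toll l) * (g p k * g q l - g p l * g q k) := by
      intro k l; simp only [hF]; ring
    have hGnn : ∀ k l, 0 ≤ F k l + F l k := by
      intro k l
      rw [hFrw]
      rcases lt_trichotomy (Toll k) (Toll l) with h1 | h1 | h1
      · exact le_of_lt (mul_pos_of_neg_of_neg (by linarith) (by linarith [hexp k l h1]))
      · simp [h1]
      · exact le_of_lt (mul_pos (by linarith) (by linarith [hexp l k h1]))
    have hGpos : 0 < F k₀ l₀ + F l₀ k₀ := by
      rw [hFrw]
      rcases lt_or_gt_of_ne hkl with h1 | h1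
      · exact mul_pos_of_neg_of_neg (by linarith) (by linarith [hexp k₀ l₀ h1])
      · exact mul_pos (by linarith) (by linarith [hexp l₀ k₀ h1])
    have hsum2 : 0 < ∑ k, ∑ l, (F k l + F l k) := by
      refine Finset.sum_pos' (fun k _ => Finset.sum_nonneg fun l _ => hGnn k l)
        ⟨k₀, Finset.mem_univ _, Finset.sum_pos' (fun l _ => hGnn k₀ l)
          ⟨l₀, Finset.mem_univ _, hGpos⟩⟩
    have hswap : ∑ k : Fin n, ∑ l : Fin n, F l k = ∑ k : Fin n, ∑ l : Fin n, F k l :=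
      Finset.sum_comm
    have hsplit : ∑ k, ∑ l, (F k l + F l k) =
        (∑ k : Fin n, ∑ l : Fin n, F k l) + (∑ k : Fin n, ∑ l : Fin n, F l k) := by
      simp [Finset.sum_add_distrib]
    have hnum : 0 < ∑ k : Fin n, ∑ l : Fin n, F k l := by
      rw [hsplit, hswap] at hsum2; linarith
    have e1 : (∑ k, g p k * Toll k) * (∑ j, g q j)
        = ∑ k : Fin n, ∑ l : Fin n, g p k * Toll k * g q l := by
      rw [Finset.sum_mul]
      exact Finset.sum_congr rfl fun k _ => Finset.mul_sum _ _ _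
    have e1' : (∑ k, g q k * Toll k) * (∑ j, g p j)
        = ∑ k : Fin n, ∑ l : Fin n, g q k * Toll k * g p l := by
      rw [Finset.sum_mul]
      exact Finset.sum_congr rfl fun k _ => Finset.mul_sum _ _ _
    have e2 : ∑ k : Fin n, ∑ l : Fin n, g q k * Toll k * g p l
        = ∑ k : Fin n, ∑ l : Fin n, g p k * g q l * Toll l := by
      rw [Finset.sum_comm]
      exact Finset.sum_congr rfl fun k _ => Finset.sum_congr rfl fun l _ => by ring
    have hcross : (∑ k, g p k * Toll k) * (∑ j, g q j) -
        (∑ k, g q k * Toll k) * (∑ j, g p j) = ∑ k : Fin n, ∑ l : Fin n, F k l := by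
      rw [e1, e1', e2, ← Finset.sum_sub_distrib]
      refine Finset.sum_congr rfl fun k _ => ?_
      rw [← Finset.sum_sub_distrib]
      exact Finset.sum_congr rfl fun l _ => by simp only [hF]; ring
    rw [hEp p, hEp q, div_lt_div_iff₀ (hSpos q) (hSpos p)]
    have hpos := mul_pos (mul_pos hL hw) hnum
    rw [← hcross] at hpos
    nlinarith [hpos]
  refine ⟨fun a _ b _ hab => key a b hab, fun p₁ p₂ _ _ hne => ?_⟩
  rcases hne.lt_or_gt with h | h
  · exact mul_neg_of_neg_of_pos (by linarith) (sub_pos.2 (key p₁ p₂ h))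
  · exact mul_neg_of_pos_of_neg (by linarith) (sub_neg.2 (key p₂ p₁ h))
end
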